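/- Let n ≥ 2, let A = {a ∈ ℝ^n : a_i ≥ 0 for all i and Σ_i a_i ≤ 1} be the set of sub-probability vectors over n non-null assignments (the remaining probability goes to a null assignment of value zero), and let θ ∈ ℝ^n have pairwise distinct and nonzero coordinates. Let F be the set of all implementable-with-payments rules f : ℝ^n → A. Then H(θ, F) = {λθ : λ ∈ ℝ, λ ≤ 1}: in the presence of a zero-valued null assignment, the only harmless types for all truthful-in-expectation mechanisms are the scalings of θ by a factor at most 1. -/

import Mathlib

/-!
If `θ'` is not of the form `l • θ` with `l ≤ 1`, then `θ` and `θ' - θ` lie in a common open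
half-space `{x | 0 < v ⬝ᵥ x}`. Splitting a small multiple of `v` into its positive and negative
parts `a - b` gives two sub-probability vectors, and the posted-price rule "receive `a` at price
`v ⬝ᵥ θ'`, otherwise `b`" is implementable, assigns `b` to `θ` and `a` to `θ'`; since
`(a - b) ⬝ᵥ θ > 0`, type `θ` strictly prefers the outcome of `θ'`. Conversely, the two incentive
constraints between `θ` and `l • θ` add up to `(1 - l) (f θ - f (l • θ)) ⬝ᵥ θ ≥ 0`.
-/

open Matrix BigOperators

/-- An allocation rule is implementable-with-payments if there is a payment rule
making truthful reporting optimal. -/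
def Implementable {n : ℕ} (f : (Fin n → ℝ) → (Fin n → ℝ)) : Prop :=
  ∃ p : (Fin n → ℝ) → ℝ, ∀ θ θ' : Fin n → ℝ, f θ ⬝ᵥ θ - p θ ≥ f θ' ⬝ᵥ θ - p θ'

section Separation

open scoped InnerProductSpace

variable {F : Type*} [NormedAddCommGroup F] [InnerProductSpace ℝ F]

theorem exists_inner_pos_and_inner_pos {u u' : F} (hu : u ≠ 0)
    (h : ∀ c : ℝ, c ≤ 0 → u' ≠ c • u) : ∃ w : F, 0 < ⟪w, u⟫_ℝ ∧ 0 < ⟪w, u'⟫_ℝ := by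
  have hu' : u' ≠ 0 := by simpa using h 0 le_rfl
  have hcs : 0 < ‖u‖ * ‖u'‖ + ⟪u, u'⟫_ℝ := by
    refine lt_of_le_of_ne ?_ fun h0 => ?_
    · linarith [neg_le_of_abs_le (abs_real_inner_le_norm u u')]
    · have hnorm : ‖u‖ * ‖u'‖ ≠ 0 := by positivity
      obtain ⟨-, r, hr, rfl⟩ := (real_inner_div_norm_mul_norm_eq_neg_one_iff u u').1 <| by
        rw [div_eq_iff hnorm]; linarith
      exact h r hr.le rfl
  -- `w` bisects the angle between `u` and `u'`.
  refine ⟨‖u'‖ • u + ‖u‖ • u', ?_, ?_⟩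
  · have : ⟪‖u'‖ • u + ‖u‖ • u', u⟫_ℝ = ‖u‖ * (‖u‖ * ‖u'‖ + ⟪u, u'⟫_ℝ) := by
      rw [inner_add_left, real_inner_smul_left, real_inner_smul_left,
        real_inner_self_eq_norm_mul_norm, real_inner_comm]
      ring
    rw [this]
    exact mul_pos (norm_pos_iff.2 hu) hcs
  · have : ⟪‖u'‖ • u + ‖u‖ • u', u'⟫_ℝ = ‖u'‖ * (‖u‖ * ‖u'‖ + ⟪u, u'⟫_ℝ) := by
      rw [inner_add_left, real_inner_smul_left, real_inner_smul_left,
        real_inner_self_eq_norm_mul_norm]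
      ring
    rw [this]
    exact mul_pos (norm_pos_iff.2 hu') hcs

theorem exists_dotProduct_pos_and_dotProduct_pos {ι : Type*} [Fintype ι] {u u' : ι → ℝ}
    (hu : u ≠ 0) (h : ∀ c : ℝ, c ≤ 0 → u' ≠ c • u) : ∃ w : ι → ℝ, 0 < w ⬝ᵥ u ∧ 0 < w ⬝ᵥ u' := by
  obtain ⟨w, hwu, hwu'⟩ := exists_inner_pos_and_inner_pos
    (u := WithLp.toLp 2 u) (u' := WithLp.toLp 2 u') (by simpa using hu)
    fun c hc heq => h c hc (WithLp.toLp_injective 2 (by rw [heq, WithLp.toLp_smul]))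
  refine ⟨WithLp.ofLp w, ?_, ?_⟩
  · simpa [EuclideanSpace.inner_eq_star_dotProduct, dotProduct_comm] using hwu
  · simpa [EuclideanSpace.inner_eq_star_dotProduct, dotProduct_comm] using hwu'

end Separation

section SubStdSimplex

variable {ι : Type*} [Fintype ι]

def subStdSimplex (ι : Type*) [Fintype ι] : Set (ι → ℝ) :=
  {a | (∀ i, 0 ≤ a i) ∧ ∑ i, a i ≤ 1}

theorem posPart_mem_subStdSimplex {v : ι → ℝ} (hv : ∑ i, |v i| ≤ 1) :
    v⁺ ∈ subStdSimplex ι :=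
  ⟨fun i => posPart_nonneg (v i), (Finset.sum_le_sum fun i _ =>
    (le_add_of_nonneg_right (negPart_nonneg (v i))).trans_eq (posPart_add_negPart (v i))).trans hv⟩

theorem negPart_mem_subStdSimplex {v : ι → ℝ} (hv : ∑ i, |v i| ≤ 1) :
    v⁻ ∈ subStdSimplex ι :=
  ⟨fun i => negPart_nonneg (v i), (Finset.sum_le_sum fun i _ =>
    (le_add_of_nonneg_left (posPart_nonneg (v i))).trans_eq (posPart_add_negPart (v i))).trans hv⟩

theorem exists_pos_sum_abs_smul_le_one (v : ι → ℝ) : ∃ c : ℝ, 0 < c ∧ ∑ i, |(c • v) i| ≤ 1 := by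
  have hs : 0 < 1 + ∑ i, |v i| := by positivity
  refine ⟨(1 + ∑ i, |v i|)⁻¹, inv_pos.2 hs, ?_⟩
  simp only [Pi.smul_apply, smul_eq_mul, abs_mul, abs_of_pos (inv_pos.2 hs), ← Finset.mul_sum]
  rw [inv_mul_le_one₀ hs]
  linarith

end SubStdSimplex

section Implementable

variable {n : ℕ}

theorem implementable_ite_le_dotProduct (a b : Fin n → ℝ) (d : ℝ) :
    Implementable fun x => if d ≤ (a - b) ⬝ᵥ x then a else b := by
  refine ⟨fun x => if d ≤ (a - b) ⬝ᵥ x then d else 0, fun x r => ?_⟩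
  have hab : a ⬝ᵥ x = b ⬝ᵥ x + (a - b) ⬝ᵥ x := by rw [sub_dotProduct]; ring
  dsimp only
  split_ifs <;> linarith

theorem Implementable.dotProduct_sub_nonneg {f : (Fin n → ℝ) → (Fin n → ℝ)} (hf : Implementable f)
    (θ θ' : Fin n → ℝ) : 0 ≤ (f θ - f θ') ⬝ᵥ (θ - θ') := by
  obtain ⟨p, hp⟩ := hf
  have h₁ := hp θ θ'
  have h₂ := hp θ' θ
  simp only [sub_dotProduct, dotProduct_sub]
  linarith

theorem Implementable.dotProduct_smul_le {f : (Fin n → ℝ) → (Fin n → ℝ)} (hf : Implementable f)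
    (θ : Fin n → ℝ) {l : ℝ} (hl : l ≤ 1) : f (l • θ) ⬝ᵥ θ ≤ f θ ⬝ᵥ θ := by
  rcases hl.eq_or_lt with rfl | hl
  · rw [one_smul]
  have hmono := hf.dotProduct_sub_nonneg θ (l • θ)
  rw [show θ - l • θ = (1 - l) • θ by rw [sub_smul, one_smul], dotProduct_smul, smul_eq_mul,
    mul_nonneg_iff_of_pos_left (sub_pos.2 hl), sub_dotProduct, sub_nonneg] at hmono
  exact hmono

theorem exists_implementable_dotProduct_lt {θ θ' v : Fin n → ℝ} (hθ : 0 < v ⬝ᵥ θ)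
    (hθθ' : v ⬝ᵥ θ < v ⬝ᵥ θ') : ∃ f : (Fin n → ℝ) → (Fin n → ℝ),
      (∀ x, f x ∈ subStdSimplex (Fin n)) ∧ Implementable f ∧ f θ ⬝ᵥ θ < f θ' ⬝ᵥ θ := by
  obtain ⟨c, hc, hcv⟩ := exists_pos_sum_abs_smul_le_one v
  set w := c • v
  have hwθ : 0 < w ⬝ᵥ θ := by rw [smul_dotProduct, smul_eq_mul]; positivity
  have hwθθ' : w ⬝ᵥ θ < w ⬝ᵥ θ' := by
    simp only [w, smul_dotProduct, smul_eq_mul]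
    exact mul_lt_mul_of_pos_left hθθ' hc
  have hrule := implementable_ite_le_dotProduct w⁺ w⁻ (w ⬝ᵥ θ')
  rw [posPart_sub_negPart] at hrule
  refine ⟨_, fun x => ?_, hrule, ?_⟩
  · split_ifs
    exacts [posPart_mem_subStdSimplex hcv, negPart_mem_subStdSimplex hcv]
  · rw [if_neg hwθθ'.not_ge, if_pos le_rfl]
    have hsplit : w⁺ ⬝ᵥ θ = w⁻ ⬝ᵥ θ + w ⬝ᵥ θ := by
      rw [← posPart_sub_negPart w, sub_dotProduct, posPart_sub_negPart]
      ring
    linarith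

end Implementable

theorem harmless_truthful_in_expectation_with_null_general {n : ℕ}
    (θ : Fin n → ℝ)
    (hθ0 : ∀ i, θ i ≠ 0) :
    {θ' : Fin n → ℝ | ∀ f : (Fin n → ℝ) → (Fin n → ℝ),
        (∀ x, (∀ i, 0 ≤ f x i) ∧ (∑ i, f x i) ≤ 1) → Implementable f →
        f θ ⬝ᵥ θ ≥ f θ' ⬝ᵥ θ} =
    {θ' : Fin n → ℝ | ∃ l : ℝ, l ≤ 1 ∧ θ' = l • θ} := by
  ext θ'
  constructor
  · intro hharmless
    by_contra hθ'
    have hsep : ∀ c : ℝ, c ≤ 0 → θ' - θ ≠ c • θ := fun c hc h =>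
      hθ' ⟨1 + c, by linarith, by rw [add_smul, one_smul, ← h, add_sub_cancel]⟩
    have hθ_ne : θ ≠ 0 := by
      obtain ⟨i, -⟩ := Function.ne_iff.1 (hsep 0 le_rfl)
      exact fun h => hθ0 i (congrFun h i)
    obtain ⟨v, hvθ, hvθ'⟩ := exists_dotProduct_pos_and_dotProduct_pos hθ_ne hsep
    rw [dotProduct_sub, sub_pos] at hvθ'
    obtain ⟨f, hfA, hf, hlt⟩ := exists_implementable_dotProduct_lt hvθ hvθ'
    exact (hharmless f hfA hf).not_gt hlt
  · rintro ⟨l, hl, rfl⟩ f - hf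
    exact hf.dotProduct_smul_le θ hl

/-- Theorem 5: with a zero-valued null assignment (allocations are sub-probability
vectors), for `n ≥ 2` and a type with pairwise distinct, nonzero coordinates, the
harmless set of all truthful-in-expectation mechanisms is `{λ • θ : λ ≤ 1}`. -/
theorem harmless_truthful_in_expectation_with_null {n : ℕ} (hn : 2 ≤ n)
    (θ : Fin n → ℝ) (hθ : ∀ i j : Fin n, i ≠ j → θ i ≠ θ j)
    (hθ0 : ∀ i, θ i ≠ 0) :
    {θ' : Fin n → ℝ | ∀ f : (Fin n → ℝ) → (Fin n → ℝ),
        (∀ x, (∀ i, 0 ≤ f x i) ∧ (∑ i, f x i) ≤ 1) → Implementable f →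
        f θ ⬝ᵥ θ ≥ f θ' ⬝ᵥ θ} =
    {θ' : Fin n → ℝ | ∃ l : ℝ, l ≤ 1 ∧ θ' = l • θ} :=
  harmless_truthful_in_expectation_with_null_general θ hθ0
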